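/- Let 0 < α ≤ 1/2, let M be the 2×2 symmetric stochastic matrix [[1−α, α],[α, 1−α]] on {A,B}, and let μ be a strictly positive initial pmf on {A,B}. Consider the Markov chain path pmf p(x_0,x_1,x_2) = μ(x_0)·M(x_0,x_1)·M(x_1,x_2), and let U = (X_0, X_2) and X = X_1. Then every joint pmf of (U, X, Q) extending the law of (U,X), where Q takes values in {qA, qB, qAB}, that satisfies decodability (P(X=A, Q=qB)=0 and P(X=B, Q=qA)=0) and privacy (Q independent of U) has expected query length E[ℓ(Q)] ≥ 2 − 2α²/(α² + (1−α)²), where ℓ(qA)=ℓ(qB)=1 and ℓ(qAB)=2. -/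

import Mathlib

/-- The two sources. -/
inductive Src | A | B
deriving DecidableEq

instance instFintypeSrc : Fintype Src :=
  ⟨{Src.A, Src.B}, by intro x; cases x <;> simp⟩

/-- The three possible queries: only source A, only source B, or both. -/
inductive Qry | qA | qB | qAB
deriving DecidableEq

instance instFintypeQry : Fintype Qry :=
  ⟨{Qry.qA, Qry.qB, Qry.qAB}, by intro x; cases x <;> simp⟩

/-- The length (download cost) of each query. -/
noncomputable def len : Qry → ℝ
  | Qry.qA => 1
  | Qry.qB => 1
  | Qry.qAB => 2

/-! `E[ℓ(Q)] = 2 − P(Q = qA) − P(Q = qB)`. By privacy `P(Q = qA) = P(Q = qA | U = (B,B))`,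
and by decodability `Q = qA` forces `X = A`, so this is at most
`P(X = A | U = (B,B)) = α² / (α² + (1−α)²)`; symmetrically for `qB` with `U = (A,A)`. -/

open Finset

theorem Src.sum_eq {M : Type*} [AddCommMonoid M] (f : Src → M) :
    ∑ x, f x = f Src.A + f Src.B := by
  rw [show (univ : Finset Src) = {Src.A, Src.B} from rfl, sum_pair (by decide)]

theorem Qry.sum_eq {M : Type*} [AddCommMonoid M] (f : Qry → M) :
    ∑ q, f q = f Qry.qA + f Qry.qB + f Qry.qAB := by
  rw [show (univ : Finset Qry) = {Qry.qA, Qry.qB, Qry.qAB} from rfl,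
    sum_insert (by decide), sum_pair (by decide), add_assoc]

section Marginals

variable {U X Q : Type*} [Fintype X] [Fintype Q] (j : U → X → Q → ℝ)

def probU (u : U) : ℝ := ∑ x, ∑ q, j u x q

def probUX (u : U) (x : X) : ℝ := ∑ q, j u x q

def probUQ (u : U) (q : Q) : ℝ := ∑ x, j u x q

def probQ [Fintype U] (q : Q) : ℝ := ∑ u, ∑ x, j u x q

variable {j}

theorem probUQ_le_probUX_of_eq_zero (hnn : ∀ u x q, 0 ≤ j u x q) {u : U} {q : Q} {x₀ : X}
    (hzero : ∀ x ≠ x₀, j u x q = 0) : probUQ j u q ≤ probUX j u x₀ :=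
  calc probUQ j u q = j u x₀ q := Fintype.sum_eq_single x₀ hzero
    _ ≤ probUX j u x₀ := single_le_sum (fun q _ => hnn u x₀ q) (mem_univ q)

theorem probQ_le_of_private [Fintype U] (hnn : ∀ u x q, 0 ≤ j u x q) {u : U} {q : Q} {x₀ : X}
    (hpriv : probUQ j u q = probU j u * probQ j q) (hu : 0 < probU j u)
    (hzero : ∀ x ≠ x₀, j u x q = 0) : probQ j q ≤ probUX j u x₀ / probU j u := by
  rw [le_div_iff₀ hu, mul_comm, ← hpriv]
  exact probUQ_le_probUX_of_eq_zero hnn hzero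

theorem sum_mul_len_eq [Fintype U] (j : U → X → Qry → ℝ) :
    ∑ u, ∑ x, ∑ q, j u x q * len q
      = 2 * ∑ u, ∑ x, ∑ q, j u x q - probQ j Qry.qA - probQ j Qry.qB := by
  simp only [Qry.sum_eq, len, probQ, mul_sum, ← sum_sub_distrib]
  refine sum_congr rfl fun u _ => sum_congr rfl fun x _ => by ring

end Marginals

theorem sum_sum_sum_mul_mul_eq_sum {ι : Type*} [Fintype ι] (μ : ι → ℝ) (K : ι → ι → ℝ)
    (hK : ∀ a, ∑ b, K a b = 1) : ∑ a, ∑ c, ∑ b, μ a * K a b * K b c = ∑ a, μ a := by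
  refine sum_congr rfl fun a _ => ?_
  rw [sum_comm]
  simp_rw [← mul_sum, hK, mul_one, ← mul_sum, hK, mul_one]

theorem Src.eq_of_ne_of_ne {x y b : Src} (hxy : x ≠ y) (hyb : y ≠ b) : x = b := by
  cases x <;> cases y <;> cases b <;> simp_all

def flipKernel (α : ℝ) (a b : Src) : ℝ := if a = b then 1 - α else α

namespace flipKernel

variable (α : ℝ)

theorem of_ne {a b : Src} (h : a ≠ b) : flipKernel α a b = α := if_neg h

theorem sum_eq_one (a : Src) : ∑ b, flipKernel α a b = 1 := by
  cases a <;> simp [Src.sum_eq, flipKernel]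

theorem sum_mul_self (a : Src) :
    ∑ x, flipKernel α a x * flipKernel α x a = α ^ 2 + (1 - α) ^ 2 := by
  cases a <;> simp [Src.sum_eq, flipKernel] <;> ring

end flipKernel

theorem probQ_le_of_markov {α : ℝ} {μ : Src → ℝ} {j : Src × Src → Src → Qry → ℝ}
    (hnn : ∀ u x q, 0 ≤ j u x q) (hμpos : ∀ x, 0 < μ x)
    (hmarg : ∀ u x, probUX j u x = μ u.1 * flipKernel α u.1 x * flipKernel α x u.2)
    (hpriv : ∀ u q, probUQ j u q = probU j u * probQ j q)
    {b x₀ : Src} {q : Qry} (hx₀ : x₀ ≠ b) (hzero : j (b, b) b q = 0) :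
    probQ j q ≤ α ^ 2 / (α ^ 2 + (1 - α) ^ 2) := by
  have hD : 0 < α ^ 2 + (1 - α) ^ 2 := by nlinarith [sq_nonneg (2 * α - 1)]
  have hU : probU j (b, b) = μ b * (α ^ 2 + (1 - α) ^ 2) := by
    change ∑ x, probUX j (b, b) x = _
    simp_rw [hmarg, mul_assoc, ← mul_sum, flipKernel.sum_mul_self]
  have hUX : probUX j (b, b) x₀ = μ b * α ^ 2 := by
    rw [hmarg, flipKernel.of_ne α hx₀.symm, flipKernel.of_ne α hx₀]
    ring
  calc probQ j q ≤ probUX j (b, b) x₀ / probU j (b, b) :=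
        probQ_le_of_private hnn (hpriv _ _) (by rw [hU]; exact mul_pos (hμpos b) hD)
          fun x hx => Src.eq_of_ne_of_ne hx hx₀ ▸ hzero
    _ = α ^ 2 / (α ^ 2 + (1 - α) ^ 2) := by
        rw [hUX, hU, mul_div_mul_left _ _ (hμpos b).ne']

theorem example_converse_bound_general (α : ℝ)
    (μ : Src → ℝ) (hμpos : ∀ x, 0 < μ x) (hμ : ∑ x, μ x = 1)
    (j : Src × Src → Src → Qry → ℝ)
    (hnn : ∀ u x q, 0 ≤ j u x q)
    -- the (U,X)-marginal is the law of ((X₀,X₂),X₁) under the Markov chain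
    (hmarg : ∀ u x, ∑ q, j u x q
      = μ u.1 * (if u.1 = x then 1 - α else α) * (if x = u.2 then 1 - α else α))
    -- decodability
    (hdecA : ∑ u, j u Src.A Qry.qB = 0)
    (hdecB : ∑ u, j u Src.B Qry.qA = 0)
    -- privacy: Q is independent of U
    (hpriv : ∀ u q, ∑ x, j u x q
      = (∑ x, ∑ q', j u x q') * (∑ u', ∑ x, j u' x q)) :
    2 - 2 * α ^ 2 / (α ^ 2 + (1 - α) ^ 2) ≤ ∑ u, ∑ x, ∑ q, j u x q * len q := by
  have hdec {x q} (h : ∑ u, j u x q = 0) (u) : j u x q = 0 :=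
    (sum_eq_zero_iff_of_nonneg fun u _ => hnn u x q).mp h u (mem_univ u)
  have htot : ∑ u, ∑ x, ∑ q, j u x q = 1 := by
    simp only [Fintype.sum_prod_type, hmarg]
    exact (sum_sum_sum_mul_mul_eq_sum μ (flipKernel α) (flipKernel.sum_eq_one α)).trans hμ
  have hqA := probQ_le_of_markov hnn hμpos hmarg hpriv (x₀ := Src.A) (b := Src.B) (by decide)
    (hdec hdecB _)
  have hqB := probQ_le_of_markov hnn hμpos hmarg hpriv (x₀ := Src.B) (b := Src.A) (by decide)
    (hdec hdecA _)
  rw [sum_mul_len_eq, htot, mul_div_assoc]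
  linarith

/-- For the symmetric two-state Markov chain with flip probability `0 < α ≤ 1/2` and strictly
positive initial pmf `μ`, with `U = (X₀, X₂)` and `X = X₁`, every joint pmf of `(U,X,Q)`
extending the law of `(U,X)` that is decodable and private has expected query length at least
`2 − 2α²/(α²+(1−α)²)`. -/
theorem example_converse_bound (α : ℝ) (h0 : 0 < α) (h2 : α ≤ 1 / 2)
    (μ : Src → ℝ) (hμpos : ∀ x, 0 < μ x) (hμ : ∑ x, μ x = 1)
    (j : Src × Src → Src → Qry → ℝ)
    (hnn : ∀ u x q, 0 ≤ j u x q)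
    -- the (U,X)-marginal is the law of ((X₀,X₂),X₁) under the Markov chain
    (hmarg : ∀ u x, ∑ q, j u x q
      = μ u.1 * (if u.1 = x then 1 - α else α) * (if x = u.2 then 1 - α else α))
    -- decodability
    (hdecA : ∑ u, j u Src.A Qry.qB = 0)
    (hdecB : ∑ u, j u Src.B Qry.qA = 0)
    -- privacy: Q is independent of U
    (hpriv : ∀ u q, ∑ x, j u x q
      = (∑ x, ∑ q', j u x q') * (∑ u', ∑ x, j u' x q)) :
    2 - 2 * α ^ 2 / (α ^ 2 + (1 - α) ^ 2) ≤ ∑ u, ∑ x, ∑ q, j u x q * len q :=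
  example_converse_bound_general α μ hμpos hμ j hnn hmarg hdecA hdecB hpriv
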